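/- arXiv:1607.01903 — 2 statements merged into one kernel-verified Lean document; each statement's English description precedes it below -/
import Mathlib

section
/- Let G be a multigraph, k, p positive integers, and let A₁, …, A_p be nonempty subsets of p distinct equivalence classes of ∼ₖ. Then there is an edge set X of size at most (p−1)(k−1) such that for all distinct i, j, the multigraph G−X contains no path from A_i to A_j. -/
/-- A multigraph: an edge type `E` together with an assignment of an
unordered pair of (not necessarily distinct) endvertices to every edge.
Loops and parallel edges are allowed. -/
structure Multigraph (V E : Type) where
  ends : E → Sym2 V

namespace Multigraph

variable {V E : Type}

/-- Walks in a multigraph, recording the edges traversed. -/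
inductive Walk (G : Multigraph V E) : V → V → Type
  | nil (v : V) : Walk G v v
  | cons {u v w : V} (e : E) (h : G.ends e = s(u, v)) (p : Walk G v w) : Walk G u w

namespace Walk

variable {G : Multigraph V E}

/-- The list of vertices visited by a walk. -/
def support : {u v : V} → G.Walk u v → List V
  | u, _, .nil _ => [u]
  | u, _, .cons _ _ p => u :: support p

/-- The list of edges traversed by a walk. -/
def edges : {u v : V} → G.Walk u v → List E
  | _, _, .nil _ => []
  | _, _, .cons e _ p => e :: edges p

/-- The length (number of edges) of a walk. -/
def length : {u v : V} → G.Walk u v → ℕ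
  | _, _, .nil _ => 0
  | _, _, .cons _ _ p => length p + 1

/-- A walk is a path if it repeats no vertex. -/
def IsPath {u v : V} (p : G.Walk u v) : Prop := p.support.Nodup

/-- A closed walk is a cycle if it is nonempty, repeats no edge and repeats no
vertex except the base vertex.  Cycles of length `1` (loops) and of
length `2` (pairs of parallel edges) are allowed. -/
def IsCycle {u : V} (p : G.Walk u u) : Prop :=
  p.edges ≠ [] ∧ p.edges.Nodup ∧ p.support.tail.Nodup

end Walk

open scoped Classical in
/-- The degree of a vertex in a multigraph: loops count twice. -/
noncomputable def degree (G : Multigraph V E) [Fintype E] (v : V) : ℕ :=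
  ∑ e : E, (if G.ends e = s(v, v) then 2 else if v ∈ G.ends e then 1 else 0)

end Multigraph

namespace Multigraph

variable {V E : Type}

/-- There exist `k` pairwise edge-disjoint `u`–`v`-paths in `G`. -/
def EdgeDisjointPaths (G : Multigraph V E) (k : ℕ) (u v : V) : Prop :=
  ∃ P : Fin k → G.Walk u v,
    (∀ i, (P i).IsPath) ∧
    ∀ i j, i ≠ j → ∀ e ∈ (P i).edges, e ∉ (P j).edges

/-- The relation `u ∼ₖ v`: either `u = v` or there are `k` pairwise
edge-disjoint `u`–`v`-paths in `G`. -/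
def SimK (G : Multigraph V E) (k : ℕ) (u v : V) : Prop :=
  u = v ∨ G.EdgeDisjointPaths k u v

end Multigraph

/-!
A cut of fewer than `k` edges cannot separate two vertices joined by `k` edge-disjoint paths, so
it leaves each class entirely on one side. Conversely, by the edge version of Menger's theorem
(obtained by augmenting an integral flow along residual paths), vertices from different classes
are separated by a cut of at most `k - 1` edges. Splitting the classes along one such cut and
recursing on both sides uses `p - 1` cuts in total.
-/

namespace Multigraph

open Finset

variable {V E : Type} {G : Multigraph V E}

namespace Walk

lemma start_mem_support : ∀ {u v : V} (p : G.Walk u v), u ∈ p.support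
  | _, _, .nil _ => List.mem_singleton_self _
  | _, _, .cons _ _ _ => List.mem_cons_self

lemma mem_support_of_mem_ends :
    ∀ {u v : V} (p : G.Walk u v) {e : E}, e ∈ p.edges → ∀ x ∈ G.ends e, x ∈ p.support
  | _, _, .nil _, _, he => by simp [edges] at he
  | _, _, .cons e' h' p', e, he => by
    intro x hx
    rcases List.mem_cons.1 he with rfl | he
    · rw [h', Sym2.mem_iff] at hx
      rcases hx with rfl | rfl
      · exact List.mem_cons_self
      · exact List.mem_cons_of_mem _ p'.start_mem_support
    · exact List.mem_cons_of_mem _ (p'.mem_support_of_mem_ends he x hx)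

lemma IsPath.edges_nodup : ∀ {u v : V} {p : G.Walk u v}, p.IsPath → p.edges.Nodup
  | _, _, .nil _, _ => List.nodup_nil
  | u, _, .cons e h p, hp => by
    rw [IsPath, support, List.nodup_cons] at hp
    refine List.nodup_cons.2 ⟨fun he => hp.1 ?_, IsPath.edges_nodup hp.2⟩
    exact p.mem_support_of_mem_ends he u (by rw [h]; exact Sym2.mem_mk_left u _)

def AllSteps (P : V → V → E → Prop) : ∀ {u v : V}, G.Walk u v → Prop
  | _, _, .nil _ => True
  | _, _, @Walk.cons _ _ _ u x _ e _ p => P u x e ∧ AllSteps P p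

lemma allSteps_true : ∀ {u v : V} (p : G.Walk u v), p.AllSteps fun _ _ _ => True
  | _, _, .nil _ => trivial
  | _, _, .cons _ _ p => ⟨trivial, allSteps_true p⟩

lemma exists_suffix {P : V → V → E → Prop} :
    ∀ {u v : V} (p : G.Walk u v), p.AllSteps P → ∀ x ∈ p.support,
      ∃ q : G.Walk x v, q.AllSteps P ∧ q.support.Sublist p.support ∧ q.edges.Sublist p.edges
  | _, _, .nil _, _, x, hx => by
    obtain rfl := List.mem_singleton.1 hx
    exact ⟨.nil _, trivial, .refl _, .refl _⟩
  | _, _, .cons e h p, hP, x, hx => by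
    rcases List.mem_cons.1 hx with rfl | hx
    · exact ⟨.cons e h p, hP, .refl _, .refl _⟩
    · obtain ⟨q, hqP, hqs, hqe⟩ := p.exists_suffix hP.2 x hx
      exact ⟨q, hqP, hqs.cons _, hqe.cons _⟩

lemma exists_isPath {P : V → V → E → Prop} :
    ∀ {u v : V} (p : G.Walk u v), p.AllSteps P →
      ∃ q : G.Walk u v, q.IsPath ∧ q.AllSteps P ∧ ∀ e ∈ q.edges, e ∈ p.edges
  | _, _, .nil _, _ => ⟨.nil _, List.nodup_singleton _, trivial, fun _ => id⟩
  | u, _, .cons e h p, hP => by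
    obtain ⟨q, hq, hqP, hqe⟩ := p.exists_isPath hP.2
    by_cases hu : u ∈ q.support
    · obtain ⟨r, hrP, hrs, hre⟩ := q.exists_suffix hqP u hu
      exact ⟨r, hq.sublist hrs, hrP, fun e' he' => List.mem_cons_of_mem _ (hqe e' (hre.mem he'))⟩
    · refine ⟨.cons e h q, List.nodup_cons.2 ⟨hu, hq⟩, ⟨hP.1, hqP⟩, fun e' he' => ?_⟩
      rcases List.mem_cons.1 he' with rfl | he'
      · exact List.mem_cons_self
      · exact List.mem_cons_of_mem _ (hqe e' he')

end Walk

def Separates (G : Multigraph V E) (X : Finset E) (u v : V) : Prop :=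
  ∀ q : G.Walk u v, ∃ e ∈ q.edges, e ∈ X

lemma Separates.mono {X Y : Finset E} {u v : V} (h : G.Separates X u v) (hXY : X ⊆ Y) :
    G.Separates Y u v := fun q => (h q).imp fun _ he => ⟨he.1, hXY he.2⟩

section Cuts

open scoped Classical

variable [Fintype E]

noncomputable def cutset (G : Multigraph V E) (R : Finset V) : Finset E :=
  univ.filter fun e => ∃ x ∈ G.ends e, ∃ y ∈ G.ends e, x ∈ R ∧ y ∉ R

lemma mem_cutset {R : Finset V} {e : E} :
    e ∈ G.cutset R ↔ ∃ x ∈ G.ends e, ∃ y ∈ G.ends e, x ∈ R ∧ y ∉ R := by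
  simp [cutset]

lemma mem_cutset_of_ends_eq {R : Finset V} {e : E} {x y : V} (h : G.ends e = s(x, y))
    (hx : x ∈ R) (hy : y ∉ R) : e ∈ G.cutset R :=
  mem_cutset.2 ⟨x, by simp [h], y, by simp [h], hx, hy⟩

lemma Walk.exists_mem_cutset {R : Finset V} :
    ∀ {u v : V} (p : G.Walk u v), u ∈ R → v ∉ R → ∃ e ∈ p.edges, e ∈ G.cutset R
  | _, _, .nil _, hu, hv => absurd hu hv
  | u, _, @Walk.cons _ _ _ _ x _ e h p, hu, hv => by
    by_cases hx : x ∈ R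
    · obtain ⟨e', he', hcut⟩ := p.exists_mem_cutset hx hv
      exact ⟨e', List.mem_cons_of_mem _ he', hcut⟩
    · exact ⟨e, List.mem_cons_self, mem_cutset_of_ends_eq h hu hx⟩

lemma EdgeDisjointPaths.le_card_cutset {k : ℕ} {u v : V} {R : Finset V}
    (h : G.EdgeDisjointPaths k u v) (hu : u ∈ R) (hv : v ∉ R) : k ≤ #(G.cutset R) := by
  obtain ⟨P, -, hdisj⟩ := h
  choose φ hφP hφR using fun i => (P i).exists_mem_cutset hu hv
  simpa using card_le_card_of_injOn (s := univ) φ (fun i _ => hφR i) fun i _ j _ hij =>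
    by_contra fun hne => hdisj i j hne _ (hφP i) (hij ▸ hφP j)

lemma SimK.le_card_cutset {k : ℕ} {u v : V} {R : Finset V} (h : G.SimK k u v) (hu : u ∈ R)
    (hv : v ∉ R) : k ≤ #(G.cutset R) :=
  h.elim (fun huv => absurd (huv ▸ hu) hv) (·.le_card_cutset hu hv)

variable [Fintype V]

lemma cutset_compl (R : Finset V) : G.cutset Rᶜ = G.cutset R := by
  ext e
  simp only [mem_cutset, mem_compl, not_not]
  exact ⟨fun ⟨x, hx, y, hy, h⟩ => ⟨y, hy, x, hx, h.2, h.1⟩,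
    fun ⟨x, hx, y, hy, h⟩ => ⟨y, hy, x, hx, h.2, h.1⟩⟩

lemma separates_cutset {R : Finset V} {u v : V} (h : u ∈ R ∧ v ∉ R ∨ u ∉ R ∧ v ∈ R) :
    G.Separates (G.cutset R) u v := by
  rcases h with ⟨hu, hv⟩ | ⟨hu, hv⟩
  · exact fun q => q.exists_mem_cutset hu hv
  · rw [← cutset_compl]
    exact fun q => q.exists_mem_cutset (mem_compl.2 hu) fun h => mem_compl.1 h hv

end Cuts

section Flow

open scoped Classical

/-- A partial orientation of `G`: `g e = some (x, y)` directs `e` from `x` to `y`, and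
`g e = none` leaves `e` unused. -/
def IsOrientation (G : Multigraph V E) (g : E → Option (V × V)) : Prop :=
  ∀ e x y, g e = some (x, y) → G.ends e = s(x, y)

lemma IsOrientation.update {g : E → Option (V × V)} (hg : G.IsOrientation g) {e : E}
    {c : Option (V × V)} (hc : ∀ x y, c = some (x, y) → G.ends e = s(x, y)) :
    G.IsOrientation (Function.update g e c) := by
  intro e' x y h
  by_cases he : e' = e
  · subst he
    exact hc x y (by simpa using h)
  · exact hg e' x y (by rwa [Function.update_of_ne he] at h)

noncomputable def eraseEdges (g : E → Option (V × V)) (l : List E) : E → Option (V × V) :=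
  fun e => if e ∈ l then none else g e

lemma eraseEdges_nil (g : E → Option (V × V)) : eraseEdges g [] = g :=
  funext fun _ => if_neg List.not_mem_nil

lemma eraseEdges_ne_none {g : E → Option (V × V)} {l : List E} {e : E} :
    eraseEdges g l e ≠ none ↔ e ∉ l ∧ g e ≠ none := by
  unfold eraseEdges
  split_ifs <;> simp_all

lemma eraseEdges_cons (g : E → Option (V × V)) (e : E) (l : List E) :
    eraseEdges g (e :: l) = eraseEdges (Function.update g e none) l := by
  funext e'
  by_cases h : e' = e
  · subst h
    simp [eraseEdges]
  · simp [eraseEdges, h]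

lemma IsOrientation.eraseEdges {g : E → Option (V × V)} (hg : G.IsOrientation g) (l : List E) :
    G.IsOrientation (Multigraph.eraseEdges g l) := by
  intro e x y h
  unfold Multigraph.eraseEdges at h
  split_ifs at h
  exact hg e x y h

noncomputable def arcExcess : Option (V × V) → V → ℤ
  | none => 0
  | some (x, y) => Pi.single x 1 - Pi.single y 1

/-- Pushing one more unit of flow from `u` to `x` along `e` is possible. -/
def Residual (g : E → Option (V × V)) (u x : V) (e : E) : Prop :=
  g e = none ∨ g e = some (x, u)

def ResidualAdj (G : Multigraph V E) (g : E → Option (V × V)) (u x : V) : Prop :=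
  ∃ e, G.ends e = s(u, x) ∧ Residual g u x e

lemma exists_walk_of_reflTransGen {g : E → Option (V × V)} {u v : V}
    (h : Relation.ReflTransGen (G.ResidualAdj g) u v) :
    ∃ w : G.Walk u v, w.AllSteps (Residual g) := by
  induction h using Relation.ReflTransGen.head_induction_on with
  | refl => exact ⟨.nil _, trivial⟩
  | head hstep _ ih =>
    obtain ⟨e, he, hres⟩ := hstep
    obtain ⟨w, hw⟩ := ih
    exact ⟨.cons e he w, hres, hw⟩

variable [Fintype E]

noncomputable def excess (g : E → Option (V × V)) : V → ℤ :=
  ∑ e, arcExcess (g e)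

lemma excess_apply (g : E → Option (V × V)) (v : V) : excess g v = ∑ e, arcExcess (g e) v :=
  Finset.sum_apply _ _ _

lemma excess_none : excess (fun _ : E => (none : Option (V × V))) = 0 := by
  simp [excess, arcExcess]

lemma excess_update (g : E → Option (V × V)) (e : E) (c : Option (V × V)) :
    excess (Function.update g e c) = excess g - arcExcess (g e) + arcExcess c := by
  unfold excess
  rw [Fintype.sum_eq_add_sum_compl e, Fintype.sum_eq_add_sum_compl e fun e' => arcExcess (g e'),
    Function.update_self, sum_congr rfl fun e' he' => by
      rw [Function.update_of_ne (mem_compl.1 he' ∘ mem_singleton.2)]]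
  abel

lemma excess_update_none {g : E → Option (V × V)} {e : E} {x y : V} (he : g e = some (x, y)) :
    excess (Function.update g e none) = excess g - (Pi.single x 1 - Pi.single y 1) := by
  simp [excess_update, he, arcExcess]

lemma card_filter_update_none_lt {g : E → Option (V × V)} {e : E} (he : g e ≠ none) :
    #(univ.filter fun e' => Function.update g e none e' ≠ none) <
      #(univ.filter fun e' => g e' ≠ none) := by
  refine card_lt_card ((ssubset_iff_of_subset fun e' => ?_).2 ⟨e, by simpa, by simp⟩)
  by_cases h : e' = e <;> simp [h]

lemma exists_eq_some_of_excess_pos {g : E → Option (V × V)} {v : V} (h : 0 < excess g v) :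
    ∃ e y, g e = some (v, y) := by
  by_contra! hno
  refine h.not_ge ((excess_apply g v).trans_le (sum_nonpos fun e _ => ?_))
  match hge : g e with
  | none => exact le_rfl
  | some (x, y) =>
    have hxv : x ≠ v := fun hxv => hno e y (hxv ▸ hge)
    simp only [arcExcess, Pi.sub_apply, Pi.single_apply, if_neg hxv.symm]
    split_ifs <;> norm_num

/-- Following used arcs out of `v` eventually reaches the only vertex `b` allowed to absorb flow. -/
lemma exists_trail {g : E → Option (V × V)} (hg : G.IsOrientation g) {v b : V}
    (hv : v ≠ b → 0 < excess g v) (hnn : ∀ x ≠ b, 0 ≤ excess g x) :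
    ∃ w : G.Walk v b, (∀ e ∈ w.edges, g e ≠ none) ∧
      excess (eraseEdges g w.edges) = excess g - (Pi.single v 1 - Pi.single b 1) := by
  induction hn : #(univ.filter fun e => g e ≠ none) using Nat.strong_induction_on
    generalizing g v with
  | _ n ih =>
  by_cases hvb : v = b
  · subst hvb
    refine ⟨.nil v, by simp [Walk.edges], ?_⟩
    rw [show (Walk.nil v : G.Walk v v).edges = [] from rfl, eraseEdges_nil]
    simp
  obtain ⟨e, y, he⟩ := exists_eq_some_of_excess_pos (hv hvb)
  set g₁ := Function.update g e none
  have hexcess₁ (x : V) :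
      excess g₁ x = excess g x - (if x = v then 1 else 0) + (if x = y then 1 else 0) := by
    simp only [g₁, excess_update_none he, Pi.sub_apply, Pi.single_apply]
    ring
  have hv₁ : y ≠ b → 0 < excess g₁ y := fun hyb => by
    have := hv hvb
    have := hnn y hyb
    rw [hexcess₁, if_pos rfl]
    split_ifs with hyv
    · subst hyv; omega
    · omega
  have hnn₁ : ∀ x ≠ b, 0 ≤ excess g₁ x := fun x hxb => by
    have := hv hvb
    have := hnn x hxb
    rw [hexcess₁]
    split_ifs with hxv hxy <;> (try subst hxv) <;> (try subst hxy) <;> omega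
  obtain ⟨w, hw, hwexcess⟩ := ih _ (hn ▸ card_filter_update_none_lt (by simp [he]))
    (hg.update (by simp)) hv₁ hnn₁ rfl
  have hew : e ∉ w.edges := fun h => hw e h (by simp)
  refine ⟨.cons e (hg e v y he) w, fun e' he' => ?_, ?_⟩
  · rcases List.mem_cons.1 he' with rfl | he'
    · simp [he]
    · simpa [g₁, Function.update_of_ne (ne_of_mem_of_not_mem he' hew)] using hw e' he'
  · change excess (eraseEdges g (e :: w.edges)) = _
    rw [eraseEdges_cons, hwexcess, excess_update_none he]
    abel

lemma exists_edgeDisjoint_walks {a b : V} :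
    ∀ (k : ℕ) {g : E → Option (V × V)}, G.IsOrientation g →
      excess g = (k : ℤ) • (Pi.single a 1 - Pi.single b 1) →
      ∃ P : Fin k → G.Walk a b, (∀ i, ∀ e ∈ (P i).edges, g e ≠ none) ∧
        ∀ i j, i ≠ j → ∀ e ∈ (P i).edges, e ∉ (P j).edges
  | 0, _, _, _ => ⟨Fin.elim0, fun i => i.elim0, fun i => i.elim0⟩
  | k + 1, g, hg, hflow => by
    have hflow' (x : V) :
        excess g x = (k + 1) * ((Pi.single a 1 : V → ℤ) x - (Pi.single b 1 : V → ℤ) x) := by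
      simp [hflow]
    obtain ⟨w, hw, hwexcess⟩ := exists_trail hg (v := a) (b := b)
      (fun hab => by simp [hflow', Ne.symm hab])
      (fun x hxb => by
        rw [hflow', Pi.single_apply, Pi.single_apply, if_neg hxb]
        split_ifs <;> omega)
    obtain ⟨P, hP, hdisj⟩ := exists_edgeDisjoint_walks (a := a) (b := b) k (hg.eraseEdges w.edges)
      (by rw [hwexcess, hflow]; push_cast; module)
    have hPw (i : Fin k) : ∀ e ∈ (P i).edges, e ∉ w.edges ∧ g e ≠ none := fun e he =>
      eraseEdges_ne_none.1 (hP i e he)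
    refine ⟨Fin.cons w P, fun i => ?_, fun i j hij => ?_⟩
    · cases i using Fin.cases with
      | zero => exact hw
      | succ i => exact fun e he => (hPw i e he).2
    · cases i using Fin.cases <;> cases j using Fin.cases
      · exact absurd rfl hij
      · exact fun e he hej => (hPw _ e hej).1 he
      · exact fun e he hej => (hPw _ e he).1 hej
      · exact hdisj _ _ (fun h => hij (congrArg _ h))

lemma exists_augment_step {g : E → Option (V × V)} (hg : G.IsOrientation g) {e : E} {u x : V}
    (he : G.ends e = s(u, x)) (hres : Residual g u x e) :
    ∃ c, G.IsOrientation (Function.update g e c) ∧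
      excess (Function.update g e c) = excess g + (Pi.single u 1 - Pi.single x 1) := by
  rcases hres with hge | hge
  · refine ⟨some (u, x), hg.update fun x' y' h => ?_, ?_⟩
    · obtain ⟨rfl, rfl⟩ := Prod.mk.inj (Option.some.inj h)
      exact he
    · simp [excess_update, hge, arcExcess]
  · refine ⟨none, hg.update (by simp), ?_⟩
    rw [excess_update_none hge]
    abel

lemma exists_augment {f : E → Option (V × V)} {b : V} :
    ∀ {u : V} (p : G.Walk u b), p.edges.Nodup → p.AllSteps (Residual f) →
      ∀ {g : E → Option (V × V)}, G.IsOrientation g → (∀ e ∈ p.edges, g e = f e) →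
      ∃ g', G.IsOrientation g' ∧ excess g' = excess g + (Pi.single u 1 - Pi.single b 1)
  | _, .nil _, _, _, g, hg, _ => ⟨g, hg, by simp⟩
  | u, @Walk.cons _ _ _ _ x _ e he p, hnd, hres, g, hg, hgf => by
    obtain ⟨hep, hnd⟩ := List.nodup_cons.1 hnd
    obtain ⟨c, hc, hcexcess⟩ :=
      exists_augment_step hg he (by rw [Residual, hgf e List.mem_cons_self]; exact hres.1)
    obtain ⟨g', hg', hg'excess⟩ := exists_augment p hnd hres.2 hc fun e' he' => by
      rw [Function.update_of_ne (ne_of_mem_of_not_mem he' hep)]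
      exact hgf e' (List.mem_cons_of_mem _ he')
    exact ⟨g', hg', by rw [hg'excess, hcexcess]; abel⟩

lemma sum_arcExcess_some (R : Finset V) (x y : V) :
    ∑ v ∈ R, arcExcess (some (x, y)) v = (if x ∈ R then 1 else 0) - (if y ∈ R then 1 else 0) := by
  simp [arcExcess, sum_sub_distrib]

lemma sum_excess_eq_card_cutset {g : E → Option (V × V)} (hg : G.IsOrientation g) {R : Finset V}
    (hR : ∀ e ∈ G.cutset R, ∃ x ∈ R, ∃ y ∉ R, g e = some (x, y)) :
    ∑ v ∈ R, excess g v = #(G.cutset R) := by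
  simp_rw [excess_apply]
  rw [sum_comm, ← sum_subset (subset_univ (G.cutset R)), card_eq_sum_ones, Nat.cast_sum]
  · refine sum_congr rfl fun e he => ?_
    obtain ⟨x, hx, y, hy, hge⟩ := hR e he
    simp [hge, sum_arcExcess_some, hx, hy]
  · intro e _ he
    match hge : g e with
    | none => simp [arcExcess]
    | some (x, y) =>
      have hends := hg e x y hge
      have hxy := fun hx hy => he (mem_cutset_of_ends_eq hends hx hy)
      have hyx := fun hy hx => he (mem_cutset_of_ends_eq (hends.trans Sym2.eq_swap) hy hx)
      rw [sum_arcExcess_some]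
      split_ifs <;> simp_all

lemma exists_eq_some_of_mem_cutset {g : E → Option (V × V)} (hg : G.IsOrientation g)
    {R : Finset V} (hR : ∀ x ∈ R, ∀ y, G.ResidualAdj g x y → y ∈ R) {e : E}
    (he : e ∈ G.cutset R) : ∃ x ∈ R, ∃ y ∉ R, g e = some (x, y) := by
  obtain ⟨x, hx, y, hy, hxR, hyR⟩ := mem_cutset.1 he
  have hends : G.ends e = s(x, y) :=
    (Sym2.mem_and_mem_iff (ne_of_mem_of_not_mem hxR hyR)).1 ⟨hx, hy⟩
  have hres : ¬Residual g x y e := fun h => hyR (hR x hxR y ⟨e, hends, h⟩)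
  match hge : g e with
  | none => exact absurd (.inl hge) hres
  | some (x', y') =>
    rcases Sym2.eq_iff.1 ((hg e x' y' hge).symm.trans hends) with ⟨rfl, rfl⟩ | ⟨rfl, rfl⟩
    · exact ⟨x', hxR, y', hyR, rfl⟩
    · exact absurd (.inr hge) hres

variable [Fintype V]

/-- If no augmenting walk existed, the vertices reachable from `a` in the residual graph would
form a cut of size equal to the value `k` of the flow. -/
lemma reflTransGen_residualAdj {g : E → Option (V × V)} (hg : G.IsOrientation g) {k : ℕ}
    {a b : V} (hflow : excess g = (k : ℤ) • (Pi.single a 1 - Pi.single b 1))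
    (hcut : ∀ R : Finset V, a ∈ R → b ∉ R → k < #(G.cutset R)) :
    Relation.ReflTransGen (G.ResidualAdj g) a b := by
  by_contra hab
  set R := univ.filter (Relation.ReflTransGen (G.ResidualAdj g) a)
  have haR : a ∈ R := mem_filter.2 ⟨mem_univ _, .refl⟩
  have hbR : b ∉ R := fun h => hab (mem_filter.1 h).2
  have hclosed : ∀ x ∈ R, ∀ y, G.ResidualAdj g x y → y ∈ R := fun x hx y hxy =>
    mem_filter.2 ⟨mem_univ _, (mem_filter.1 hx).2.tail hxy⟩
  have hsum := sum_excess_eq_card_cutset hg fun e he => exists_eq_some_of_mem_cutset hg hclosed he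
  simp only [hflow, Pi.smul_apply, Pi.sub_apply, smul_eq_mul, ← mul_sum, sum_sub_distrib,
    sum_pi_single', if_pos haR, if_neg hbR] at hsum
  have := hcut R haR hbR
  omega

lemma exists_flow {k : ℕ} {a b : V}
    (hcut : ∀ R : Finset V, a ∈ R → b ∉ R → k ≤ #(G.cutset R)) :
    ∃ g, G.IsOrientation g ∧ excess g = (k : ℤ) • (Pi.single a 1 - Pi.single b 1) := by
  induction k with
  | zero => exact ⟨fun _ => none, fun _ _ _ h => by simp at h, by rw [excess_none]; simp⟩
  | succ k ih =>
    obtain ⟨g, hg, hflow⟩ := ih fun R ha hb => (hcut R ha hb).trans' k.le_succ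
    obtain ⟨w, hw⟩ := exists_walk_of_reflTransGen (reflTransGen_residualAdj hg hflow hcut)
    obtain ⟨q, hq, hqres, -⟩ := w.exists_isPath hw
    obtain ⟨g', hg', hg'excess⟩ := exists_augment q hq.edges_nodup hqres hg fun _ _ => rfl
    exact ⟨g', hg', by rw [hg'excess, hflow]; push_cast; module⟩

/-- Menger's theorem for edge cuts. -/
theorem edgeDisjointPaths_of_le_card_cutset {k : ℕ} {a b : V}
    (hcut : ∀ R : Finset V, a ∈ R → b ∉ R → k ≤ #(G.cutset R)) : G.EdgeDisjointPaths k a b := by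
  obtain ⟨g, hg, hflow⟩ := exists_flow hcut
  obtain ⟨P, -, hdisj⟩ := exists_edgeDisjoint_walks k hg hflow
  choose Q hQ _ hQP using fun i => (P i).exists_isPath (Walk.allSteps_true _)
  exact ⟨Q, hQ, fun i j hij e hi hj => hdisj i j hij e (hQP i e hi) (hQP j e hj)⟩

lemma exists_card_cutset_lt_of_not_simK {k : ℕ} {u v : V}
    (h : ¬G.SimK k u v) : ∃ R : Finset V, u ∈ R ∧ v ∉ R ∧ #(G.cutset R) < k := by
  contrapose! h
  exact .inr (edgeDisjointPaths_of_le_card_cutset h)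

end Flow

lemma card_union_union_le {α : Type*} [DecidableEq α] {X₀ X₁ X₂ : Finset α} {c n₁ n₂ : ℕ}
    (h₀ : #X₀ ≤ c) (h₁ : #X₁ ≤ (n₁ - 1) * c) (h₂ : #X₂ ≤ (n₂ - 1) * c) (hn₁ : 0 < n₁) (hn₂ : 0 < n₂) :
    #(X₀ ∪ X₁ ∪ X₂) ≤ (n₁ + n₂ - 1) * c :=
  calc #(X₀ ∪ X₁ ∪ X₂) ≤ #X₀ + #X₁ + #X₂ :=
        (card_union_le _ _).trans (add_le_add_left (card_union_le _ _) _)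
    _ ≤ c + (n₁ - 1) * c + (n₂ - 1) * c := by gcongr
    _ = (n₁ + n₂ - 1) * c := by rw [show n₁ + n₂ - 1 = 1 + (n₁ - 1) + (n₂ - 1) by omega]; ring

lemma exists_separates_of_exists_small_cut [Fintype V] [Fintype E] {ι : Type} {k : ℕ}
    {A : ι → Set V}
    (hin : ∀ i, ∀ a ∈ A i, ∀ a' ∈ A i, ∀ R : Finset V, a ∈ R → a' ∉ R → k ≤ #(G.cutset R))
    (s : Finset ι)
    (hout : ∀ i ∈ s, ∀ j ∈ s, i ≠ j → ∀ a ∈ A i, ∀ b ∈ A j,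
      ∃ R : Finset V, a ∈ R ∧ b ∉ R ∧ #(G.cutset R) < k) :
    ∃ X : Finset E, #X ≤ (#s - 1) * (k - 1) ∧
      ∀ i ∈ s, ∀ j ∈ s, i ≠ j → ∀ a ∈ A i, ∀ b ∈ A j, G.Separates X a b := by
  classical
  induction s using Finset.strongInduction with
  | H s ih =>
  by_cases hpair : ∃ i ∈ s, ∃ j ∈ s, i ≠ j ∧ (A i).Nonempty ∧ (A j).Nonempty
  swap
  · refine ⟨∅, by simp, fun i hi j hj hij a ha b hb => absurd ?_ hpair⟩
    exact ⟨i, hi, j, hj, hij, ⟨a, ha⟩, ⟨b, hb⟩⟩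
  obtain ⟨i, hi, j, hj, hij, ⟨a, ha⟩, ⟨b, hb⟩⟩ := hpair
  obtain ⟨R, haR, hbR, hR⟩ := hout i hi j hj hij a ha b hb
  have hside : ∀ l, ∀ x ∈ A l, x ∈ R → ∀ y ∈ A l, y ∈ R := fun l x hx hxR y hy =>
    by_contra fun hyR => (hin l x hx y hy R hxR hyR).not_gt hR
  set s₁ := s.filter fun l => ∃ x ∈ A l, x ∈ R
  set s₂ := s.filter fun l => ¬∃ x ∈ A l, x ∈ R
  have hs₂ : ∀ l ∈ s, l ∉ s₁ → l ∈ s₂ := fun l hl hl₁ =>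
    mem_filter.2 ⟨hl, fun h => hl₁ (mem_filter.2 ⟨hl, h⟩)⟩
  have hin₁ : ∀ l ∈ s₁, ∀ x ∈ A l, x ∈ R := fun l hl =>
    let ⟨x, hx, hxR⟩ := (mem_filter.1 hl).2
    hside l x hx hxR
  have hout₂ : ∀ l ∈ s₂, ∀ x ∈ A l, x ∉ R := fun l hl x hx hxR =>
    (mem_filter.1 hl).2 ⟨x, hx, hxR⟩
  have hi₁ : i ∈ s₁ := mem_filter.2 ⟨hi, a, ha, haR⟩
  have hj₂ : j ∈ s₂ := hs₂ j hj fun hj₁ => hbR (hin₁ j hj₁ b hb)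
  obtain ⟨X₁, hX₁, hsep₁⟩ := ih s₁ (filter_ssubset.2 ⟨j, hj, (mem_filter.1 hj₂).2⟩)
    fun l hl m hm => hout l (mem_filter.1 hl).1 m (mem_filter.1 hm).1
  obtain ⟨X₂, hX₂, hsep₂⟩ := ih s₂ (filter_ssubset.2 ⟨i, hi, not_not.2 (mem_filter.1 hi₁).2⟩)
    fun l hl m hm => hout l (mem_filter.1 hl).1 m (mem_filter.1 hm).1
  refine ⟨G.cutset R ∪ X₁ ∪ X₂, ?_, fun l hl m hm hlm x hx y hy => ?_⟩
  · rw [← card_filter_add_card_filter_not (s := s) fun l => ∃ x ∈ A l, x ∈ R]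
    exact card_union_union_le (Nat.le_sub_one_of_lt hR) hX₁ hX₂ (card_pos.2 ⟨i, hi₁⟩)
      (card_pos.2 ⟨j, hj₂⟩)
  · by_cases hl₁ : l ∈ s₁ <;> by_cases hm₁ : m ∈ s₁
    · exact (hsep₁ l hl₁ m hm₁ hlm x hx y hy).mono (subset_union_right.trans subset_union_left)
    · exact (separates_cutset (.inl ⟨hin₁ l hl₁ x hx, hout₂ m (hs₂ m hm hm₁) y hy⟩)).mono
        (subset_union_left.trans subset_union_left)
    · exact (separates_cutset (.inr ⟨hout₂ l (hs₂ l hl hl₁) x hx, hin₁ m hm₁ y hy⟩)).mono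
        (subset_union_left.trans subset_union_left)
    · exact (hsep₂ l (hs₂ l hl hl₁) m (hs₂ m hm hm₁) hlm x hx y hy).mono subset_union_right

end Multigraph

theorem simK_separate_classes_general
    {V E : Type} [Fintype V] [Fintype E] (G : Multigraph V E) (k p : ℕ)
    (A : Fin p → Set V)
    (hcl : ∀ i, ∀ a ∈ A i, ∀ a' ∈ A i, G.SimK k a a')
    (hdist : ∀ i j, i ≠ j → ∀ a ∈ A i, ∀ b ∈ A j, ¬ G.SimK k a b) :
    ∃ X : Finset E, X.card ≤ (p - 1) * (k - 1) ∧
      ∀ i j, i ≠ j → ∀ a ∈ A i, ∀ b ∈ A j, ∀ q : G.Walk a b,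
        ∃ e ∈ q.edges, e ∈ X := by
  obtain ⟨X, hX, hsep⟩ := G.exists_separates_of_exists_small_cut
    (fun i a ha a' ha' _ => (hcl i a ha a' ha').le_card_cutset) Finset.univ
    fun i _ j _ hij a ha b hb => G.exists_card_cutset_lt_of_not_simK (hdist i j hij a ha b hb)
  refine ⟨X, by simpa using hX, fun i j hij a ha b hb => ?_⟩
  exact hsep i (Finset.mem_univ i) j (Finset.mem_univ j) hij a ha b hb

/-- if `A₁, …, A_p` are nonempty subsets of `p` distinct
equivalence classes of `∼ₖ`, then some edge set `X` of size at most
`(p − 1)(k − 1)` separates all the sets pairwise: for distinct `i, j`, the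
multigraph `G − X` contains no path (indeed no walk) from `A i` to `A j`. -/
theorem simK_separate_classes
    {V E : Type} [Fintype V] [Fintype E] (G : Multigraph V E) (k p : ℕ)
    (hk : 1 ≤ k) (hp : 1 ≤ p) (A : Fin p → Set V)
    (hne : ∀ i, (A i).Nonempty)
    (hcl : ∀ i, ∀ a ∈ A i, ∀ a' ∈ A i, G.SimK k a a')
    (hdist : ∀ i j, i ≠ j → ∀ a ∈ A i, ∀ b ∈ A j, ¬ G.SimK k a b) :
    ∃ X : Finset E, X.card ≤ (p - 1) * (k - 1) ∧
      ∀ i j, i ≠ j → ∀ a ∈ A i, ∀ b ∈ A j, ∀ q : G.Walk a b,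
        ∃ e ∈ q.edges, e ∈ X :=
  simK_separate_classes_general G k p A hcl hdist
end

section
/- Let G be a connected graph and F ⊆ G a frame with ds(F) maximal. For every F-path Q with endvertices u, v there is a u–v-path of length less than ℓ contained in F; moreover, if every long cycle in G has length at least 2ℓ, this short u–v-path in F is unique. -/
/-!
Adding the `F`-path `Q` to `F` gives a subgraph `F ⊔ Q` of minimum degree two in which `x` has
gained a neighbour, so `ds(F ⊔ Q) > ds(F)`; by maximality `F ⊔ Q` is not a frame and therefore
contains a short cycle `C`. As `F` is a frame, `C` uses an edge of `Q`. The internal vertices of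
`Q` have degree two in `F ⊔ Q`, so `C` follows `Q` through each of them and contains all of `Q`;
the rest of `C` is an `x`–`y`-walk in `F` of length `|C| - |Q| < ℓ`.

Two distinct short `x`–`y`-paths in `F` span a cycle of length less than `2ℓ` in `F`. It is long
because `F` is a frame, which is impossible if long cycles have length at least `2ℓ`.
-/

open SimpleGraph

/-- A frame of `G`: a subgraph with minimum degree at least `2` in which
every cycle is long, i.e. has length at least `ℓ`. -/
def IsFrame (ℓ : ℕ) {V : Type} {G : SimpleGraph V} (F : G.Subgraph) : Prop :=
  (∀ v ∈ F.verts, 2 ≤ (F.neighborSet v).ncard) ∧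
  (∀ (x : V) (C : G.Walk x x), C.IsCycle →
    (∀ e ∈ C.edges, e ∈ F.edgeSet) → ℓ ≤ C.length)

open scoped Classical in
/-- `ds F`: the sum of the degrees of the vertices of degree at least `3`
in `F`. -/
noncomputable def dsF {V : Type} [Fintype V] {G : SimpleGraph V}
    (F : G.Subgraph) : ℕ :=
  ∑ v ∈ Finset.univ.filter (fun v => 3 ≤ (F.neighborSet v).ncard),
    (F.neighborSet v).ncard

namespace SimpleGraph.Walk

variable {V : Type} {G : SimpleGraph V}

theorem IsPath.exists_eq_append_of_edges_subset {u v w : V} {P : G.Walk u v} (hP : P.IsPath)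
    {R : G.Walk u w} (hR : R.IsTrail) (h : R.edges ⊆ P.edges) :
    ∃ W : G.Walk w v, P = R.append W := by
  induction R with
  | nil => exact ⟨P, rfl⟩
  | @cons u a w _ R ih =>
    rw [edges_cons, List.cons_subset] at h
    obtain rfl := hP.eq_snd_of_mem_edges h.1
    have hnil : ¬P.Nil := edges_eq_nil.not.mp (List.ne_nil_of_mem h.1)
    rw [isTrail_cons] at hR
    have hsub : R.edges ⊆ P.tail.edges := fun e he => by
      have := h.2 he
      rw [← cons_tail_eq P hnil, edges_cons, List.mem_cons] at this
      exact this.resolve_left (by rintro rfl; exact hR.2 he)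
    obtain ⟨W, hW⟩ := ih hP.tail hR.1 hsub
    exact ⟨W, by rw [cons_append, ← hW, cons_tail_eq P hnil]⟩

theorem IsCycle.exists_snd_eq_of_mem_edges {x q : V} {C : G.Walk x x} (hC : C.IsCycle)
    (h : s(x, q) ∈ C.edges) :
    ∃ C' : G.Walk x x, C'.IsCycle ∧ C'.snd = q ∧ C'.edges.Perm C.edges := by
  have hq : q ∈ C.toSubgraph.neighborSet x := (C.mem_edges_toSubgraph).mpr h
  rw [hC.neighborSet_toSubgraph_endpoint] at hq
  rcases hq with rfl | rfl
  · exact ⟨C, hC, rfl, .refl _⟩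
  · exact ⟨C.reverse, hC.reverse, snd_reverse C, by simp [List.reverse_perm]⟩

theorem IsCycle.exists_perm_append_of_edges_subset {z x y : V} {C : G.Walk z z}
    (hC : C.IsCycle) {Q : G.Walk x y} (hQ : Q.IsPath) (hxy : x ≠ y)
    (h : Q.edges ⊆ C.edges) :
    ∃ W : G.Walk y x, (Q.edges ++ W.edges).Perm C.edges := by
  classical
  obtain ⟨q, _, Q', rfl⟩ := exists_eq_cons_of_ne hxy Q
  have hxC : x ∈ C.support := C.fst_mem_support_of_mem_edges (h List.mem_cons_self)
  have hrot := (C.rotate_edges x hxC).perm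
  obtain ⟨C', hC', rfl, hperm⟩ :=
    (hC.rotate hxC).exists_snd_eq_of_mem_edges (hrot.symm.subset (h List.mem_cons_self))
  have hQ' : Q'.edges ⊆ C'.tail.edges := fun e he => by
    have := (hperm.trans hrot).symm.subset (h (List.mem_cons_of_mem _ he))
    rw [← cons_tail_eq C' hC'.not_nil, edges_cons, List.mem_cons] at this
    refine this.resolve_left ?_
    rintro rfl
    exact ((cons_isPath_iff _ _).mp hQ).2 (Q'.fst_mem_support_of_mem_edges he)
  obtain ⟨W, hW⟩ := hC'.isPath_tail.exists_eq_append_of_edges_subset hQ.of_cons.isTrail hQ'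
  refine ⟨W, ?_⟩
  have hC'W : C'.edges = s(x, C'.snd) :: (Q'.edges ++ W.edges) := by
    rw [← edges_append, ← hW, ← edges_cons (C'.adj_snd hC'.not_nil),
      cons_tail_eq C' hC'.not_nil]
  rw [edges_cons, List.cons_append, ← hC'W]
  exact hperm.trans hrot

theorem IsPath.ncard_neighborSet_toSubgraph_eq_two_of_ne {x y w : V} {Q : G.Walk x y}
    (hQ : Q.IsPath) (hw : w ∈ Q.support) (hwx : w ≠ x) (hwy : w ≠ y) :
    (Q.toSubgraph.neighborSet w).ncard = 2 := by
  obtain ⟨i, rfl, hi⟩ := mem_support_iff_exists_getVert.mp hw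
  refine hQ.ncard_neighborSet_toSubgraph_internal_eq_two ?_ ?_
  · rintro rfl; exact hwx Q.getVert_zero
  · exact lt_of_le_of_ne hi (by rintro rfl; exact hwy Q.getVert_length)

theorem IsPath.edgeSet_subset_of_mem {x y : V} {Q : G.Walk x y} (hQ : Q.IsPath)
    {H : G.Subgraph}
    (hH : ∀ w ∈ Q.support, w ≠ x → w ≠ y → w ∈ H.verts →
      Q.toSubgraph.neighborSet w ⊆ H.neighborSet w)
    {e : Sym2 V} (he : e ∈ Q.edges) (heH : e ∈ H.edgeSet) :
    Q.edgeSet ⊆ H.edgeSet := by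
  induction Q generalizing e with
  | nil => simp at he
  | @cons x v y hxv Q ih =>
    rw [cons_isPath_iff] at hQ
    by_cases hQnil : Q.Nil
    · obtain rfl := hQnil.eq
      rw [hQnil.eq_nil] at he ⊢
      simp_all [edgeSet]
    have hvy : v ≠ y := fun h => hQnil (hQ.1.nil_iff_eq.mpr h)
    have hsnd : s(v, Q.snd) ∈ Q.edges :=
      (Q.mem_edges_toSubgraph).mp (Q.toSubgraph_adj_snd hQnil)
    have ihQ : ∀ e ∈ Q.edges, e ∈ H.edgeSet → Q.edgeSet ⊆ H.edgeSet := fun _ he =>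
      ih hQ.1 (fun w hw _ hwy hwH =>
        (Subgraph.neighborSet_subset_of_subgraph le_sup_right w).trans
          (hH w (List.mem_cons_of_mem _ hw) (by rintro rfl; exact hQ.2 hw) hwy hwH)) he
    have hvH : v ∈ H.verts := by
      rw [edges_cons, List.mem_cons] at he
      rcases he with rfl | he
      · exact H.edge_vert (Sym2.eq_swap ▸ heH)
      · exact H.edge_vert (ihQ _ he heH hsnd)
    have hnbr := hH v (List.mem_cons_of_mem _ Q.start_mem_support) hxv.ne' hvy hvH
    have hxvH : s(x, v) ∈ H.edgeSet := Sym2.eq_swap ▸ hnbr (by simp)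
    have hQH : s(v, Q.snd) ∈ H.edgeSet :=
      hnbr (Subgraph.neighborSet_subset_of_subgraph le_sup_right v (Q.toSubgraph_adj_snd hQnil))
    intro e' he'
    rw [mem_edgeSet, edges_cons, List.mem_cons] at he'
    rcases he' with rfl | he'
    · exact hxvH
    · exact ihQ _ hsnd hQH he'

theorem IsPath.neighborSet_toSubgraph_subset_of_isCycle [Finite V] {x y z w : V}
    {Q : G.Walk x y} (hQ : Q.IsPath) {C : G.Walk z z} (hC : C.IsCycle) {F : G.Subgraph}
    (hCF : ∀ e ∈ C.edges, e ∈ (F ⊔ Q.toSubgraph).edgeSet)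
    (hw : w ∈ Q.support) (hwx : w ≠ x) (hwy : w ≠ y) (hwF : w ∉ F.verts)
    (hwC : w ∈ C.support) :
    Q.toSubgraph.neighborSet w ⊆ C.toSubgraph.neighborSet w := by
  have hsub : C.toSubgraph.neighborSet w ⊆ Q.toSubgraph.neighborSet w := fun t ht => by
    have := hCF _ ((C.mem_edges_toSubgraph).mp (Subgraph.mem_edgeSet.mpr ht))
    rw [Subgraph.edgeSet_sup] at this
    exact Subgraph.mem_edgeSet.mp (this.resolve_left fun h => hwF (F.edge_vert h))
  refine (Set.eq_of_subset_of_ncard_le hsub ?_ (Set.toFinite _)).ge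
  rw [hQ.ncard_neighborSet_toSubgraph_eq_two_of_ne hw hwx hwy,
    hC.ncard_neighborSet_toSubgraph_eq_two hwC]

end SimpleGraph.Walk

section Frames

variable {V : Type} {G : SimpleGraph V}

theorem SimpleGraph.Subgraph.two_le_ncard_neighborSet_sup_toSubgraph [Finite V] {x y : V}
    {F : G.Subgraph} (hF : ∀ v ∈ F.verts, 2 ≤ (F.neighborSet v).ncard)
    {Q : G.Walk x y} (hQ : Q.IsPath) (hx : x ∈ F.verts) (hy : y ∈ F.verts) :
    ∀ v ∈ (F ⊔ Q.toSubgraph).verts, 2 ≤ ((F ⊔ Q.toSubgraph).neighborSet v).ncard := by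
  intro v hv
  by_cases hvF : v ∈ F.verts
  · exact (hF v hvF).trans
      (Set.ncard_le_ncard (neighborSet_subset_of_subgraph le_sup_left v) (Set.toFinite _))
  have hvQ : v ∈ Q.support := by
    simpa [hvF, Walk.mem_verts_toSubgraph] using hv
  rw [← hQ.ncard_neighborSet_toSubgraph_eq_two_of_ne hvQ (by rintro rfl; exact hvF hx)
    (by rintro rfl; exact hvF hy)]
  exact Set.ncard_le_ncard (neighborSet_subset_of_subgraph le_sup_right v) (Set.toFinite _)

theorem dsF_lt_dsF_of_le [Fintype V] {F F' : G.Subgraph} (hle : F ≤ F') {x : V}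
    (hx : 2 ≤ (F.neighborSet x).ncard)
    (hlt : (F.neighborSet x).ncard < (F'.neighborSet x).ncard) : dsF F < dsF F' := by
  let g : ℕ → ℕ := fun d => if 3 ≤ d then d else 0
  have hg : Monotone g := fun a b hab => by
    simp only [g]; split_ifs <;> omega
  have hdeg : ∀ v, (F.neighborSet v).ncard ≤ (F'.neighborSet v).ncard := fun v =>
    Set.ncard_le_ncard (Subgraph.neighborSet_subset_of_subgraph hle v) (Set.toFinite _)
  have hds : ∀ H : G.Subgraph, dsF H = ∑ v, g (H.neighborSet v).ncard := fun H => by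
    rw [dsF, Finset.sum_filter]
  rw [hds, hds]
  refine Finset.sum_lt_sum (fun v _ => hg (hdeg v)) ⟨x, Finset.mem_univ _, ?_⟩
  simp only [g]; split_ifs <;> omega

theorem IsFrame.exists_isCycle_sup_toSubgraph_length_lt [Fintype V] {ℓ : ℕ} {F : G.Subgraph}
    (hF : IsFrame ℓ F) (hmax : ∀ F' : G.Subgraph, IsFrame ℓ F' → dsF F' ≤ dsF F)
    {x y : V} {Q : G.Walk x y} (hQ : Q.IsPath) (hxy : x ≠ y) (hx : x ∈ F.verts)
    (hy : y ∈ F.verts) (hQF : ∀ e ∈ Q.edges, e ∉ F.edgeSet) :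
    ∃ (z : V) (C : G.Walk z z), C.IsCycle ∧
      (∀ e ∈ C.edges, e ∈ (F ⊔ Q.toSubgraph).edgeSet) ∧ C.length < ℓ := by
  by_contra! hlong
  have hframe : IsFrame ℓ (F ⊔ Q.toSubgraph) :=
    ⟨Subgraph.two_le_ncard_neighborSet_sup_toSubgraph hF.1 hQ hx hy, hlong⟩
  have hadj := Q.toSubgraph_adj_snd (Walk.not_nil_of_ne hxy)
  have hsnd : Q.snd ∈ (F ⊔ Q.toSubgraph).neighborSet x \ F.neighborSet x :=
    ⟨Or.inr hadj, fun h => hQF _ ((Q.mem_edges_toSubgraph).mp hadj) (Subgraph.mem_edgeSet.mpr h)⟩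
  refine (hmax _ hframe).not_gt (dsF_lt_dsF_of_le le_sup_left (hF.1 x hx) ?_)
  refine Set.ncard_lt_ncard ?_ (Set.toFinite _)
  exact (Set.ssubset_iff_of_subset (Subgraph.neighborSet_subset_of_subgraph le_sup_left x)).mpr
    ⟨Q.snd, hsnd⟩

theorem IsFrame.exists_isPath_length_lt_of_isCycle_sup [Finite V] {ℓ : ℕ} {F : G.Subgraph}
    (hF : IsFrame ℓ F) {x y : V} {Q : G.Walk x y} (hQ : Q.IsPath) (hxy : x ≠ y)
    (hQF : ∀ w ∈ Q.support, w ≠ x → w ≠ y → w ∉ F.verts)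
    {z : V} {C : G.Walk z z} (hC : C.IsCycle)
    (hCF : ∀ e ∈ C.edges, e ∈ (F ⊔ Q.toSubgraph).edgeSet) (hCℓ : C.length < ℓ) :
    ∃ R : G.Walk x y, R.IsPath ∧ R.length < ℓ ∧ ∀ e ∈ R.edges, e ∈ F.edgeSet := by
  obtain ⟨e, heQ, heC⟩ : ∃ e ∈ Q.edges, e ∈ C.toSubgraph.edgeSet := by
    by_contra! h
    refine hCℓ.not_ge (hF.2 z C hC fun e he => ?_)
    have := hCF e he
    rw [Subgraph.edgeSet_sup, Walk.edgeSet_toSubgraph] at this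
    exact this.resolve_right (h e · ((C.mem_edges_toSubgraph).mpr he))
  have hQC : Q.edges ⊆ C.edges := fun e' he' =>
    (C.mem_edges_toSubgraph).mp <| hQ.edgeSet_subset_of_mem
      (fun w hw hwx hwy hwC => hQ.neighborSet_toSubgraph_subset_of_isCycle hC hCF hw hwx hwy
        (hQF w hw hwx hwy) ((C.mem_verts_toSubgraph).mp hwC)) heQ heC he'
  obtain ⟨W, hW⟩ := hC.exists_perm_append_of_edges_subset hQ hxy hQC
  have hWC : ∀ e ∈ W.edges, e ∈ C.edges ∧ e ∉ Q.edges := fun e he =>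
    ⟨hW.subset (List.mem_append_right _ he), fun heQ =>
      List.disjoint_of_nodup_append (hW.nodup_iff.mpr hC.edges_nodup) heQ he⟩
  have hWℓ : W.length < ℓ := by
    have := hW.length_eq
    simp only [List.length_append, Walk.length_edges] at this
    have : Q.length ≠ 0 := fun h => hxy (Q.eq_of_length_eq_zero h)
    omega
  classical
  refine ⟨W.reverse.bypass, W.reverse.bypass_isPath,
    (W.reverse.length_bypass_le_length.trans_eq W.length_reverse).trans_lt hWℓ,
    fun e he => ?_⟩
  have heW : e ∈ W.edges := by simpa using W.reverse.edges_bypass_subset_edges he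
  have := hCF e (hWC e heW).1
  rw [Subgraph.edgeSet_sup, Walk.edgeSet_toSubgraph] at this
  exact this.resolve_right (hWC e heW).2

theorem IsFrame.eq_of_length_lt {ℓ : ℕ} {F : G.Subgraph} (hF : IsFrame ℓ F)
    (hlong : ∀ (z : V) (C : G.Walk z z), C.IsCycle → ℓ ≤ C.length → 2 * ℓ ≤ C.length)
    {x y : V} {R₁ R₂ : G.Walk x y} (h₁ : R₁.IsPath) (hℓ₁ : R₁.length < ℓ)
    (hF₁ : ∀ e ∈ R₁.edges, e ∈ F.edgeSet) (h₂ : R₂.IsPath) (hℓ₂ : R₂.length < ℓ)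
    (hF₂ : ∀ e ∈ R₂.edges, e ∈ F.edgeSet) : R₁ = R₂ := by
  by_contra hne
  obtain ⟨u, v, p, q, hp, hq, hC⟩ := h₁.exists_isCycle_of_ne h₂ hne
  have hCF : ∀ e ∈ (p.append q.reverse).edges, e ∈ F.edgeSet := by
    intro e he
    rw [Walk.edges_append, Walk.edges_reverse, List.mem_append, List.mem_reverse] at he
    exact he.elim (fun he => hF₁ e (hp.edges_subset he)) (fun he => hF₂ e (hq.edges_subset he))
  have hlen : (p.append q.reverse).length ≤ R₁.length + R₂.length := by
    have hp' := hp.edges_isInfix.length_le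
    have hq' := hq.edges_isInfix.length_le
    simp only [Walk.length_edges] at hp' hq'
    rw [Walk.length_append, Walk.length_reverse]
    omega
  have := hlong u _ hC (hF.2 u _ hC hCF)
  omega

end Frames

theorem frame_shadow_exists_unique_general {V : Type} [Fintype V] (G : SimpleGraph V)
    (ℓ : ℕ) (F : G.Subgraph) (hF : IsFrame ℓ F)
    (hmax : ∀ F' : G.Subgraph, IsFrame ℓ F' → dsF F' ≤ dsF F) :
    ∀ {x y : V} (Q : G.Walk x y), x ≠ y → Q.IsPath →
      x ∈ F.verts → y ∈ F.verts →
      (∀ z ∈ Q.support, z ≠ x → z ≠ y → z ∉ F.verts) →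
      (∀ e ∈ Q.edges, e ∉ F.edgeSet) →
      (∃ R : G.Walk x y, R.IsPath ∧ R.length < ℓ ∧
          ∀ e ∈ R.edges, e ∈ F.edgeSet) ∧
      ((∀ (z : V) (C : G.Walk z z), C.IsCycle → ℓ ≤ C.length → 2 * ℓ ≤ C.length) →
        ∀ R₁ R₂ : G.Walk x y,
          R₁.IsPath → R₁.length < ℓ → (∀ e ∈ R₁.edges, e ∈ F.edgeSet) →
          R₂.IsPath → R₂.length < ℓ → (∀ e ∈ R₂.edges, e ∈ F.edgeSet) →
          R₁ = R₂) := by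
  intro x y Q hxy hQ hx hy hQint hQF
  refine ⟨?_, fun hlong _ _ h₁ hℓ₁ hF₁ h₂ hℓ₂ hF₂ =>
    hF.eq_of_length_lt hlong h₁ hℓ₁ hF₁ h₂ hℓ₂ hF₂⟩
  obtain ⟨z, C, hC, hCF, hCℓ⟩ :=
    hF.exists_isCycle_sup_toSubgraph_length_lt hmax hQ hxy hx hy hQF
  exact hF.exists_isPath_length_lt_of_isCycle_sup hQ hxy hQint hC hCF hCℓ

/-- let `G` be connected and `F` a frame of `G` maximizing
`ds(F)`. For every `F`-path `Q` with endvertices `x, y` there is an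
`x`–`y`-path of length less than `ℓ` contained in `F`; moreover, if every
long cycle in `G` has length at least `2ℓ`, then this short `x`–`y`-path
in `F` is unique. -/
theorem frame_shadow_exists_unique {V : Type} [Fintype V] (G : SimpleGraph V)
    (ℓ : ℕ) (hℓ : 3 ≤ ℓ) (hG : G.Connected)
    (F : G.Subgraph) (hF : IsFrame ℓ F)
    (hmax : ∀ F' : G.Subgraph, IsFrame ℓ F' → dsF F' ≤ dsF F) :
    ∀ {x y : V} (Q : G.Walk x y), x ≠ y → Q.IsPath →
      x ∈ F.verts → y ∈ F.verts →
      (∀ z ∈ Q.support, z ≠ x → z ≠ y → z ∉ F.verts) →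
      (∀ e ∈ Q.edges, e ∉ F.edgeSet) →
      (∃ R : G.Walk x y, R.IsPath ∧ R.length < ℓ ∧
          ∀ e ∈ R.edges, e ∈ F.edgeSet) ∧
      ((∀ (z : V) (C : G.Walk z z), C.IsCycle → ℓ ≤ C.length → 2 * ℓ ≤ C.length) →
        ∀ R₁ R₂ : G.Walk x y,
          R₁.IsPath → R₁.length < ℓ → (∀ e ∈ R₁.edges, e ∈ F.edgeSet) →
          R₂.IsPath → R₂.length < ℓ → (∀ e ∈ R₂.edges, e ∈ F.edgeSet) →
          R₁ = R₂) :=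
  frame_shadow_exists_unique_general G ℓ F hF hmax
end
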